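/- For every integer k ≥ l, the deviation probability over the dyadic block [2^k, 2^{k+1}] satisfies P( ∃ t ∈ [2^k, 2^{k+1}] : μ̂_t − μ > z_t ) ≤ N · ( δ / (κ(N)·(k+1)) )^{(N+1)/N}. -/

import Mathlib

open MeasureTheory ProbabilityTheory Set

/-- KL divergence between Bernoulli(p) and Bernoulli(q) (real-valued formula,
valid when `q ∈ (0,1)`; conventions `0·log 0 = 0` via Lean's `Real.log 0 = 0`, `x/0 = 0`). -/
noncomputable def klBerR (p q : ℝ) : ℝ :=
  p * Real.log (p / q) + (1 - p) * Real.log ((1 - p) / (1 - q))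

/-!
Split the dyadic block `[2^k, 2^(k+1)]` into `N` slices `[u, v]` with `N v ≤ (N + 1) u`. On a
slice, let `t₀` minimise `t z_t` over the times whose threshold is below `1 - μ`, and let
`s ≥ 0` be the tilt with `s p - log (1 - μ + μ e^s) = KL(p, μ)` for `p = μ + N/(N+1) z_{t₀}`.
The products of the factors `e^{s Y_i} / E[e^{s Y_i}]` form a nonnegative mean-one martingale.
As `e^{sy} ≤ 1 - y + y e^s` on `[0,1]`, every `E[e^{s Y_i}] ≤ 1 - μ + μ e^s`, so a deviation at
any time `t ≤ v ≤ (N+1)/N t₀` of the slice pushes the martingale above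
`(κ (k+1) / δ)^((N+1)/N)`, which by Ville's maximal inequality has probability at most
`(δ / (κ (k+1)))^((N+1)/N)`. A union bound over the `N` slices gives the factor `N`.
-/
open Finset Real
open scoped NNReal ENNReal

theorem Real.exp_mul_le_one_sub_add_mul_exp {y : ℝ} (hy : y ∈ Icc (0 : ℝ) 1) (s : ℝ) :
    exp (s * y) ≤ 1 - y + y * exp s := by
  have := convexOn_exp.2 (mem_univ 0) (mem_univ s) (sub_nonneg.2 hy.2) hy.1 (by ring)
  simpa [mul_comm s] using this

theorem exists_mul_sub_log_eq_klBerR {μ p : ℝ} (hμ : 0 < μ) (hμp : μ < p) (hp : p < 1) :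
    ∃ s, 0 ≤ s ∧ s * p - log (1 - μ + μ * exp s) = klBerR p μ := by
  have hp0 : 0 < p := hμ.trans hμp
  have h1p : 0 < 1 - p := by linarith
  have h1μ : 0 < 1 - μ := by linarith
  refine ⟨log (p * (1 - μ) / ((1 - p) * μ)), log_nonneg ?_, ?_⟩
  · rw [le_div_iff₀ (by positivity)]
    nlinarith
  · have hB : 1 - μ + μ * (p * (1 - μ) / ((1 - p) * μ)) = (1 - μ) / (1 - p) := by
      field_simp
      ring
    rw [exp_log (by positivity), hB, klBerR, log_div (by positivity) (by positivity),
      log_div h1μ.ne' h1p.ne', log_div hp0.ne' hμ.ne', log_div h1p.ne' h1μ.ne',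
      log_mul hp0.ne' h1μ.ne', log_mul h1p.ne' hμ.ne']
    ring

theorem Real.exp_neg_log_div {x : ℝ} (hx : 0 < x) (c : ℝ) : exp (-(log x / c)) = x⁻¹ ^ c⁻¹ := by
  rw [rpow_def_of_pos (inv_pos.2 hx), log_inv, div_eq_mul_inv, neg_mul]

theorem Real.add_one_le_logb_two_mul {k t : ℕ} (hkt : 2 ^ k ≤ t) :
    (k : ℝ) + 1 ≤ logb 2 (2 * t) := by
  have ht : (2 : ℝ) ^ k ≤ t := by exact_mod_cast hkt
  have hpow : (0 : ℝ) < 2 ^ k := by positivity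
  rw [le_logb_iff_rpow_le one_lt_two (by linarith), rpow_add_one two_ne_zero, rpow_natCast]
  linarith

theorem Real.tsum_nat_add_rpow_neg_pos {a s : ℝ} (ha : 0 ≤ a) (hs : 1 < s) :
    0 < ∑' n : ℕ, ((n : ℝ) + a + 1) ^ (-s) := by
  have hsum : Summable fun n : ℕ => ((n : ℝ) + a + 1) ^ (-s) :=
    ((summable_one_div_nat_add_rpow (a + 1) s).2 hs).congr fun n => by
      rw [abs_of_nonneg (by positivity), rpow_neg (by positivity), one_div, add_assoc]
  exact hsum.tsum_pos (fun n => by positivity) 0 (by positivity)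

theorem lil_kappa_pos {δ : ℝ} (hδ : 0 < δ) {l N : ℕ} (hN : 0 < N) :
    0 < δ ^ ((1:ℝ)/((N:ℝ)+1)) *
      ((if l ≠ 0 then
          ∑ t ∈ Finset.Icc 1 N, (Real.logb 2 (2*(t:ℝ))) ^ (-(((N:ℝ)+1)/(N:ℝ)))
        else 0)
        + (N:ℝ) * ∑' k : ℕ, ((k:ℝ) + (l:ℝ) + 1) ^ (-(((N:ℝ)+1)/(N:ℝ))))
        ^ ((N:ℝ)/((N:ℝ)+1)) := by
  have hN' : (0 : ℝ) < N := by exact_mod_cast hN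
  have hfinite : 0 ≤ if l ≠ 0 then
      ∑ t ∈ Finset.Icc 1 N, (logb 2 (2 * (t : ℝ))) ^ (-(((N : ℝ) + 1) / N)) else 0 := by
    split_ifs
    · refine sum_nonneg fun t ht => rpow_nonneg (logb_nonneg one_lt_two ?_) _
      have : (1 : ℝ) ≤ t := by exact_mod_cast (Finset.mem_Icc.1 ht).1
      linarith
    · rfl
  have htail := tsum_nat_add_rpow_neg_pos l.cast_nonneg
    (show (1 : ℝ) < (N + 1) / N by rw [lt_div_iff₀ hN']; linarith)
  have := mul_pos hN' htail
  positivity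

theorem sum_range_div_le_one {Y : ℕ → ℝ} (hY : ∀ i, Y i ≤ 1) (t : ℕ) :
    (∑ i ∈ range t, Y i) / t ≤ 1 :=
  div_le_one_of_le₀ ((sum_le_sum fun i _ => hY i).trans_eq (by simp)) t.cast_nonneg

theorem div_add_one_mul_add_le {N a w : ℕ} (hNw : N * w ≤ a) (j : ℕ) :
    (N : ℝ) / (N + 1) * ((a + (j + 1) * w : ℕ) : ℝ) ≤ ((a + j * w : ℕ) : ℝ) := by
  rw [div_mul_eq_mul_div, div_le_iff₀ (by positivity)]
  have : N * (a + (j + 1) * w) ≤ (a + j * w) * (N + 1) := by nlinarith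
  exact_mod_cast this

theorem measure_exists_mem_Icc_le_sum {α : Type*} {_ : MeasurableSpace α} (μ : Measure α)
    (E : ℕ → α → Prop) (a w : ℕ) {n : ℕ} (hn : 0 < n) :
    μ {x | ∃ t, a ≤ t ∧ t ≤ a + n * w ∧ E t x} ≤
      ∑ j ∈ range n, μ {x | ∃ t, a + j * w ≤ t ∧ t ≤ a + (j + 1) * w ∧ E t x} := by
  induction n, hn using Nat.le_induction with
  | base => simp
  | succ n _ ih =>
    rw [sum_range_succ]
    refine (measure_mono ?_).trans ((measure_union_le _ _).trans (add_le_add ih le_rfl))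
    rintro x ⟨t, hat, htb, hx⟩
    by_cases ht : t ≤ a + n * w
    · exact Or.inl ⟨t, hat, ht, hx⟩
    · exact Or.inr ⟨t, by omega, htb, hx⟩

section

variable {Ω : Type*} {m0 : MeasurableSpace Ω} {P : Measure Ω}

theorem MeasureTheory.Martingale.maximal_ineq_of_nonneg [IsFiniteMeasure P] {f : ℕ → Ω → ℝ}
    {𝒢 : Filtration ℕ m0} (hf : Martingale f 𝒢 P) (hnonneg : 0 ≤ f) {a : ℝ} (ha : 0 < a)
    (n : ℕ) : P {ω | ∃ k ≤ n, a ≤ f k ω} ≤ ENNReal.ofReal ((∫ ω, f 0 ω ∂P) / a) := by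
  lift a to ℝ≥0 using ha.le
  set E := {ω | (a : ℝ) ≤ (range (n + 1)).sup' nonempty_range_add_one fun k => f k ω}
  have hsub : {ω | ∃ k ≤ n, (a : ℝ) ≤ f k ω} ⊆ E := fun ω ⟨k, hkn, hk⟩ =>
    hk.trans (le_sup' (fun k => f k ω) (mem_range_succ_iff.2 hkn))
  have hint : ∫ ω, f n ω ∂P = ∫ ω, f 0 ω ∂P := by
    simpa using (hf.setIntegral_eq (Nat.zero_le n) MeasurableSet.univ).symm
  have hmax : (a : ℝ≥0∞) * P E ≤ ENNReal.ofReal (∫ ω, f 0 ω ∂P) :=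
    calc (a : ℝ≥0∞) * P E ≤ ENNReal.ofReal (∫ ω in E, f n ω ∂P) :=
          maximal_ineq hf.submartingale hnonneg n
      _ ≤ ENNReal.ofReal (∫ ω, f 0 ω ∂P) := by
          rw [← hint]
          exact ENNReal.ofReal_le_ofReal
            (setIntegral_le_integral (hf.integrable n) (.of_forall (hnonneg n)))
  have ha' : (a : ℝ≥0∞) ≠ 0 := by exact_mod_cast ha.ne'
  rw [ENNReal.ofReal_div_of_pos ha, ENNReal.ofReal_coe_nnreal]
  refine (measure_mono hsub).trans ?_
  rwa [ENNReal.le_div_iff_mul_le (Or.inl ha') (Or.inl ENNReal.coe_ne_top), mul_comm]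

theorem MeasureTheory.Martingale.measure_exists_ge_le [IsFiniteMeasure P] {f : ℕ → Ω → ℝ}
    {𝒢 : Filtration ℕ m0} (hf : Martingale f 𝒢 P) (hnonneg : 0 ≤ f) {a : ℝ} (ha : 0 < a) :
    P {ω | ∃ n, a ≤ f n ω} ≤ ENNReal.ofReal ((∫ ω, f 0 ω ∂P) / a) := by
  have hmono : Monotone fun n => {ω | ∃ k ≤ n, a ≤ f k ω} :=
    fun n n' hnn' ω ⟨k, hkn, hk⟩ => ⟨k, hkn.trans hnn', hk⟩
  have hunion : {ω | ∃ n, a ≤ f n ω} = ⋃ n, {ω | ∃ k ≤ n, a ≤ f k ω} := by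
    ext ω
    simp only [mem_ofPred_eq, mem_iUnion]
    exact ⟨fun ⟨n, hn⟩ => ⟨n, n, le_rfl, hn⟩, fun ⟨_, k, _, hk⟩ => ⟨k, hk⟩⟩
  rw [hunion, hmono.measure_iUnion]
  exact iSup_le (hf.maximal_ineq_of_nonneg hnonneg ha)

theorem ProbabilityTheory.iIndepFun.integrable_prod_range [IsFiniteMeasure P] {X : ℕ → Ω → ℝ}
    (hXm : ∀ i, Measurable (X i)) (hindep : iIndepFun X P) (hint : ∀ i, Integrable (X i) P)
    (n : ℕ) : Integrable (∏ i ∈ range n, X i) P := by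
  induction n with
  | zero => exact integrable_const (1 : ℝ)
  | succ n ih =>
    rw [prod_range_succ]
    exact (hindep.indepFun_finsetProd_of_notMem hXm notMem_range_self).integrable_mul ih (hint n)

theorem ProbabilityTheory.iIndepFun.martingale_prod_range_succ [IsFiniteMeasure P]
    {X : ℕ → Ω → ℝ} (hXm : ∀ i, StronglyMeasurable (X i)) (hindep : iIndepFun X P)
    (hint : ∀ i, Integrable (X i) P) (hmean : ∀ i, ∫ ω, X i ω ∂P = 1) :
    Martingale (fun n => ∏ i ∈ range (n + 1), X i) (Filtration.natural X hXm) P := by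
  have hadapted : StronglyAdapted (Filtration.natural X hXm) fun n => ∏ i ∈ range (n + 1), X i :=
    fun n => Finset.stronglyMeasurable_prod _ fun i hi =>
      (Filtration.stronglyAdapted_natural hXm i).mono
        (Filtration.mono _ (Nat.lt_succ_iff.1 (mem_range.1 hi)))
  have hprod := hindep.integrable_prod_range (fun i => (hXm i).measurable) hint
  refine martingale_nat hadapted (fun n => hprod (n + 1)) fun n => ?_
  rw [prod_range_succ _ (n + 1)]
  filter_upwards [condExp_mul_of_stronglyMeasurable_left (hadapted n)
      (prod_range_succ X (n + 1) ▸ hprod (n + 2)) (hint (n + 1)),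
    hindep.condExp_natural_ae_eq_of_lt hXm n.lt_succ_self] with ω hmul hcond
  simp [hmul, hcond, hmean]

theorem ProbabilityTheory.iIndepFun.measure_exists_le_prod_le [IsFiniteMeasure P]
    {X : ℕ → Ω → ℝ} (hXm : ∀ i, Measurable (X i)) (hindep : iIndepFun X P)
    (hX_nonneg : ∀ i ω, 0 ≤ X i ω) (hint : ∀ i, Integrable (X i) P)
    (hmean : ∀ i, ∫ ω, X i ω ∂P = 1) {a : ℝ} (ha : 0 < a) :
    P {ω | ∃ t, 0 < t ∧ a ≤ ∏ i ∈ range t, X i ω} ≤ ENNReal.ofReal a⁻¹ := by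
  have hville := (hindep.martingale_prod_range_succ (fun i => (hXm i).stronglyMeasurable) hint
    hmean).measure_exists_ge_le
    (fun n ω => by
      simp only [Pi.zero_apply, prod_apply]
      exact prod_nonneg fun i _ => hX_nonneg i ω) ha
  have h0 : ∫ ω, (∏ i ∈ range (0 + 1), X i) ω ∂P = 1 := by simpa using hmean 0
  refine (measure_mono ?_).trans (hville.trans_eq (by rw [h0, one_div]))
  rintro ω ⟨t, ht, hat⟩
  exact ⟨t - 1, by rwa [Nat.sub_add_cancel ht, prod_apply]⟩

theorem integral_exp_mul_le [IsProbabilityMeasure P] {Y : Ω → ℝ} (hYm : Measurable Y)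
    (hY : ∀ ω, Y ω ∈ Icc (0 : ℝ) 1) (s : ℝ) :
    ∫ ω, exp (s * Y ω) ∂P ≤ 1 - ∫ ω, Y ω ∂P + (∫ ω, Y ω ∂P) * exp s := by
  have hYint : Integrable Y P := .of_mem_Icc 0 1 hYm.aemeasurable (.of_forall hY)
  have hint : Integrable (fun ω => 1 - Y ω) P := (integrable_const 1).sub hYint
  calc ∫ ω, exp (s * Y ω) ∂P ≤ ∫ ω, (1 - Y ω + Y ω * exp s) ∂P :=
        integral_mono_of_nonneg (.of_forall fun _ => (exp_pos _).le)
          (hint.add (hYint.mul_const _))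
          (.of_forall fun ω => exp_mul_le_one_sub_add_mul_exp (hY ω) s)
    _ = 1 - ∫ ω, Y ω ∂P + (∫ ω, Y ω ∂P) * exp s := by
        rw [integral_add hint (hYint.mul_const _), integral_sub (integrable_const 1) hYint,
          integral_mul_const]
        simp

theorem measure_exists_le_mul_sum_sub_le [IsProbabilityMeasure P] {Y : ℕ → Ω → ℝ}
    (hmeas : ∀ i, Measurable (Y i)) (hindep : iIndepFun Y P)
    (hbdd : ∀ i ω, Y i ω ∈ Icc (0 : ℝ) 1) {μ : ℝ} (hmean : ∀ i, ∫ ω, Y i ω ∂P = μ) (s a : ℝ) :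
    P {ω | ∃ t, 0 < t ∧ a ≤ s * ∑ i ∈ range t, Y i ω - t * log (1 - μ + μ * exp s)} ≤
      ENNReal.ofReal (exp (-a)) := by
  set m : ℕ → ℝ := fun i => ∫ ω, exp (s * Y i ω) ∂P
  have hexp_int (i : ℕ) : Integrable (fun ω => exp (s * Y i ω)) P := by
    refine .of_bound (by fun_prop) (exp |s|) (.of_forall fun ω => ?_)
    rw [norm_of_nonneg (exp_pos _).le, exp_le_exp]
    nlinarith [le_abs_self s, abs_nonneg s, (hbdd i ω).1, (hbdd i ω).2]
  have hm_pos (i : ℕ) : 0 < m i := integral_exp_pos (hexp_int i)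
  have hm_le (i : ℕ) : m i ≤ 1 - μ + μ * exp s :=
    hmean i ▸ integral_exp_mul_le (hmeas i) (hbdd i) s
  have hB_pos : 0 < 1 - μ + μ * exp s := (hm_pos 0).trans_le (hm_le 0)
  set X : ℕ → Ω → ℝ := fun i ω => exp (s * Y i ω) / m i
  have hX_mean (i : ℕ) : ∫ ω, X i ω ∂P = 1 := by
    simp only [X, integral_div]
    exact div_self (hm_pos i).ne'
  have hville := iIndepFun.measure_exists_le_prod_le (X := X) (fun i => by fun_prop)
    (hindep.comp (fun i y => exp (s * y) / m i) fun i => by fun_prop)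
    (fun i ω => div_nonneg (exp_pos _).le (hm_pos i).le) (fun i => (hexp_int i).div_const _)
    hX_mean (exp_pos a)
  refine (measure_mono ?_).trans (hville.trans_eq (by rw [exp_neg]))
  rintro ω ⟨t, ht, hat⟩
  refine ⟨t, ht, ?_⟩
  calc exp a ≤ exp (∑ i ∈ range t, (s * Y i ω - log (1 - μ + μ * exp s))) := by
        rw [exp_le_exp, sum_sub_distrib, ← mul_sum]
        simpa using hat
    _ = ∏ i ∈ range t, exp (s * Y i ω) / (1 - μ + μ * exp s) := by
        rw [exp_sum]
        exact prod_congr rfl fun i _ => by rw [exp_sub, exp_log hB_pos]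
    _ ≤ ∏ i ∈ range t, X i ω :=
        prod_le_prod (fun i _ => by positivity) fun i _ =>
          div_le_div_of_nonneg_left (exp_pos _).le (hm_pos i) (hm_le i)

theorem measure_exists_sum_div_sub_gt_le_of_le_mul [IsProbabilityMeasure P] {Y : ℕ → Ω → ℝ}
    (hmeas : ∀ i, Measurable (Y i)) (hindep : iIndepFun Y P)
    (hbdd : ∀ i ω, Y i ω ∈ Icc (0 : ℝ) 1) {μ : ℝ} (hμ : μ ∈ Ioo (0 : ℝ) 1)
    (hmean : ∀ i, ∫ ω, Y i ω ∂P = μ) {c : ℝ} (hc0 : 0 < c) (hc1 : c < 1) {u v : ℕ} (hu : 0 < u)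
    {z : ℕ → ℝ} {τ ζ g : ℝ} (hvτ : c * v ≤ τ) (hζ : ζ ∈ Ioo 0 (1 - μ))
    (hg : g ≤ τ * klBerR (μ + c * ζ) μ)
    (hmin : ∀ t, u ≤ t → t ≤ v → z t < 1 - μ → τ * ζ ≤ t * z t) :
    P {ω | ∃ t, u ≤ t ∧ t ≤ v ∧ (∑ i ∈ range t, Y i ω) / t - μ > z t} ≤
      ENNReal.ofReal (exp (-(g / c))) := by
  obtain ⟨s, hs, hkl⟩ := exists_mul_sub_log_eq_klBerR (p := μ + c * ζ) hμ.1
    (by nlinarith [hζ.1]) (by nlinarith [hζ.2, mul_lt_mul_of_pos_right hc1 hζ.1])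
  set B := log (1 - μ + μ * exp s)
  have hsB : s * μ ≤ B :=
    (le_log_iff_exp_le (add_pos (sub_pos.2 hμ.2) (mul_pos hμ.1 (exp_pos s)))).2
      (exp_mul_le_one_sub_add_mul_exp (Ioo_subset_Icc_self hμ) s)
  refine (measure_mono ?_).trans
    (measure_exists_le_mul_sum_sub_le hmeas hindep hbdd hmean s (g / c))
  rintro ω ⟨t, hut, htv, hdev⟩
  have ht : (0 : ℝ) < t := by exact_mod_cast hu.trans_le hut
  have hτt : τ * ζ ≤ t * z t :=
    hmin t hut htv (by linarith [sum_range_div_le_one (fun i => (hbdd i ω).2) t])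
  have hsum : t * (μ + z t) ≤ ∑ i ∈ range t, Y i ω := by
    have := (lt_div_iff₀ ht).1 (by linarith : μ + z t < (∑ i ∈ range t, Y i ω) / t)
    linarith
  have htτ : (t : ℝ) ≤ τ / c := by
    rw [le_div_iff₀ hc0]
    have : (t : ℝ) ≤ v := by exact_mod_cast htv
    nlinarith
  refine ⟨t, hu.trans_le hut, ?_⟩
  calc g / c ≤ τ / c * klBerR (μ + c * ζ) μ := by
        rw [div_mul_eq_mul_div]
        exact div_le_div_of_nonneg_right hg hc0.le
    _ = s * (τ * ζ) - τ / c * (B - s * μ) := by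
        rw [← hkl]
        field_simp
        ring
    _ ≤ s * (t * z t) - t * (B - s * μ) := by
        gcongr
    _ ≤ s * ∑ i ∈ range t, Y i ω - t * B := by
        nlinarith

theorem measure_exists_sum_div_sub_gt_le [IsProbabilityMeasure P] {Y : ℕ → Ω → ℝ}
    (hmeas : ∀ i, Measurable (Y i)) (hindep : iIndepFun Y P)
    (hbdd : ∀ i ω, Y i ω ∈ Icc (0 : ℝ) 1) {μ : ℝ} (hμ : μ ∈ Ioo (0 : ℝ) 1)
    (hmean : ∀ i, ∫ ω, Y i ω ∂P = μ) {c : ℝ} (hc0 : 0 < c) (hc1 : c < 1) {u v : ℕ} (hu : 0 < u)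
    (huv : c * v ≤ u) {z : ℕ → ℝ} {g : ℝ}
    (hz : ∀ t, u ≤ t → t ≤ v → z t < 1 - μ → 0 < z t ∧ g ≤ t * klBerR (μ + c * z t) μ) :
    P {ω | ∃ t, u ≤ t ∧ t ≤ v ∧ (∑ i ∈ range t, Y i ω) / t - μ > z t} ≤
      ENNReal.ofReal (exp (-(g / c))) := by
  classical
  set A := (Finset.Icc u v).filter fun t => z t < 1 - μ
  obtain hA | hA := A.eq_empty_or_nonempty
  · refine (measure_mono (t := ∅) ?_).trans (by simp)
    rintro ω ⟨t, hut, htv, hdev⟩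
    have : t ∈ A := mem_filter.2 ⟨Finset.mem_Icc.2 ⟨hut, htv⟩,
      by linarith [sum_range_div_le_one (fun i => (hbdd i ω).2) t]⟩
    simp [hA] at this
  obtain ⟨t₀, ht₀A, ht₀min⟩ := exists_min_image A (fun t => (t : ℝ) * z t) hA
  obtain ⟨ht₀, hz₀⟩ := mem_filter.1 ht₀A
  obtain ⟨hut₀, ht₀v⟩ := Finset.mem_Icc.1 ht₀
  obtain ⟨hz₀_pos, hg⟩ := hz t₀ hut₀ ht₀v hz₀
  exact measure_exists_sum_div_sub_gt_le_of_le_mul hmeas hindep hbdd hμ hmean hc0 hc1 hu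
    (huv.trans (by exact_mod_cast hut₀)) ⟨hz₀_pos, hz₀⟩ hg fun t hut htv hzt =>
      ht₀min t (mem_filter.2 ⟨Finset.mem_Icc.2 ⟨hut, htv⟩, hzt⟩)

end

theorem lil_klucb_dyadic_block_deviation_general
    {Ω : Type*} [MeasurableSpace Ω] (P : Measure Ω) [IsProbabilityMeasure P]
    (Y : ℕ → Ω → ℝ) (hmeas : ∀ i, Measurable (Y i))
    (hindep : iIndepFun Y P)
    (hbdd : ∀ i ω, Y i ω ∈ Set.Icc (0:ℝ) 1)
    (μ : ℝ) (hμ : μ ∈ Set.Ioo (0:ℝ) 1)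
    (hmean : ∀ i, ∫ ω, Y i ω ∂P = μ)
    (δ : ℝ) (hδ : δ ∈ Set.Ioo (0:ℝ) 1)
    (l N : ℕ) (hN : N = 2 ^ l)
    (κ : ℝ)
    (hκ : κ = δ ^ ((1:ℝ)/((N:ℝ)+1)) *
      ((if l ≠ 0 then
          ∑ t ∈ Finset.Icc 1 N, (Real.logb 2 (2*(t:ℝ))) ^ (-(((N:ℝ)+1)/(N:ℝ)))
        else 0)
        + (N:ℝ) * ∑' k : ℕ, ((k:ℝ) + (l:ℝ) + 1) ^ (-(((N:ℝ)+1)/(N:ℝ))))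
        ^ ((N:ℝ)/((N:ℝ)+1)))
    (f : ℕ → ℝ)
    (hf : ∀ t : ℕ, f t = Real.log (κ * Real.logb 2 (2*(t:ℝ)) / δ) / (t:ℝ))
    (z : ℕ → ℝ)
    (hz : ∀ t : ℕ, 0 < t →
      z t ∈ Set.Ioc (0:ℝ) (1 - μ) ∧
      ((∃ y ∈ Set.Ioc (0:ℝ) (1 - μ),
          klBerR (μ + ((N:ℝ)/((N:ℝ)+1)) * y) μ = f t) →
        klBerR (μ + ((N:ℝ)/((N:ℝ)+1)) * z t) μ = f t) ∧
      ((¬ ∃ y ∈ Set.Ioc (0:ℝ) (1 - μ),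
          klBerR (μ + ((N:ℝ)/((N:ℝ)+1)) * y) μ = f t) →
        z t = 1 - μ)) :
    ∀ k : ℕ, l ≤ k →
      P {ω | ∃ t : ℕ, 2 ^ k ≤ t ∧ t ≤ 2 ^ (k+1) ∧
          (∑ j ∈ Finset.range t, Y j ω) / (t:ℝ) - μ > z t} ≤
        ENNReal.ofReal ((N:ℝ) * (δ / (κ * ((k:ℝ)+1))) ^ (((N:ℝ)+1)/(N:ℝ))) := by
  intro k hk
  obtain ⟨hδ0, -⟩ := hδ
  have hN0 : 0 < N := hN ▸ Nat.two_pow_pos l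
  have hκ0 : 0 < κ := hκ ▸ lil_kappa_pos hδ0 hN0
  set c : ℝ := N / (N + 1)
  have hc1 : c < 1 := (div_lt_one (by positivity)).2 (by linarith)
  set w := 2 ^ (k - l)
  have hNw : N * w = 2 ^ k := by rw [hN, ← pow_add, Nat.add_sub_cancel' hk]
  have hactive (t : ℕ) (ht : 2 ^ k ≤ t) (hzt : z t < 1 - μ) :
      0 < z t ∧ log (κ * (k + 1) / δ) ≤ t * klBerR (μ + c * z t) μ := by
    have htpos : 0 < t := (Nat.two_pow_pos k).trans_le ht
    obtain ⟨hz_mem, hsolved, hunsolved⟩ := hz t htpos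
    refine ⟨hz_mem.1, ?_⟩
    rw [hsolved (by_contra fun h => hzt.ne (hunsolved h)), hf,
      mul_div_cancel₀ _ (Nat.cast_pos.2 htpos).ne']
    gcongr
    exact add_one_le_logb_two_mul ht
  calc _ ≤ ∑ j ∈ range N, P {ω | ∃ t, 2 ^ k + j * w ≤ t ∧ t ≤ 2 ^ k + (j + 1) * w ∧
          (∑ i ∈ Finset.range t, Y i ω) / (t:ℝ) - μ > z t} := by
        rw [pow_succ, mul_two, ← hNw]
        exact measure_exists_mem_Icc_le_sum P _ _ w hN0
    _ ≤ ∑ j ∈ range N, ENNReal.ofReal (exp (-(log (κ * (k + 1) / δ) / c))) :=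
        sum_le_sum fun j _ => measure_exists_sum_div_sub_gt_le hmeas hindep hbdd hμ hmean
          (by positivity) hc1 (by positivity) (div_add_one_mul_add_le hNw.le j)
          fun t hut _ hzt => hactive t (le_of_add_le_left hut) hzt
    _ = _ := by
        rw [sum_const, card_range, nsmul_eq_mul, ← ENNReal.ofReal_natCast,
          ← ENNReal.ofReal_mul (Nat.cast_nonneg N), exp_neg_log_div (by positivity), inv_div,
          inv_div]

/-- For every `k ≥ l`, the deviation probability over the dyadic block `[2^k, 2^(k+1)]`
satisfies `P(∃ t ∈ [2^k,2^(k+1)] : μ̂_t - μ > z_t) ≤ N·(δ/(κ(N)·(k+1)))^((N+1)/N)`. -/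
theorem lil_klucb_dyadic_block_deviation
    {Ω : Type*} [MeasurableSpace Ω] (P : Measure Ω) [IsProbabilityMeasure P]
    (Y : ℕ → Ω → ℝ) (hmeas : ∀ i, Measurable (Y i))
    (hindep : iIndepFun Y P)
    (hident : ∀ i, IdentDistrib (Y i) (Y 0) P P)
    (hbdd : ∀ i ω, Y i ω ∈ Set.Icc (0:ℝ) 1)
    (μ : ℝ) (hμ : μ ∈ Set.Ioo (0:ℝ) 1)
    (hmean : ∀ i, ∫ ω, Y i ω ∂P = μ)
    (δ : ℝ) (hδ : δ ∈ Set.Ioo (0:ℝ) 1)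
    (l N : ℕ) (hN : N = 2 ^ l)
    (κ : ℝ)
    (hκ : κ = δ ^ ((1:ℝ)/((N:ℝ)+1)) *
      ((if l ≠ 0 then
          ∑ t ∈ Finset.Icc 1 N, (Real.logb 2 (2*(t:ℝ))) ^ (-(((N:ℝ)+1)/(N:ℝ)))
        else 0)
        + (N:ℝ) * ∑' k : ℕ, ((k:ℝ) + (l:ℝ) + 1) ^ (-(((N:ℝ)+1)/(N:ℝ))))
        ^ ((N:ℝ)/((N:ℝ)+1)))
    (f : ℕ → ℝ)
    (hf : ∀ t : ℕ, f t = Real.log (κ * Real.logb 2 (2*(t:ℝ)) / δ) / (t:ℝ))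
    (z : ℕ → ℝ)
    (hz : ∀ t : ℕ, 0 < t →
      z t ∈ Set.Ioc (0:ℝ) (1 - μ) ∧
      ((∃ y ∈ Set.Ioc (0:ℝ) (1 - μ),
          klBerR (μ + ((N:ℝ)/((N:ℝ)+1)) * y) μ = f t) →
        klBerR (μ + ((N:ℝ)/((N:ℝ)+1)) * z t) μ = f t) ∧
      ((¬ ∃ y ∈ Set.Ioc (0:ℝ) (1 - μ),
          klBerR (μ + ((N:ℝ)/((N:ℝ)+1)) * y) μ = f t) →
        z t = 1 - μ)) :
    ∀ k : ℕ, l ≤ k →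
      P {ω | ∃ t : ℕ, 2 ^ k ≤ t ∧ t ≤ 2 ^ (k+1) ∧
          (∑ j ∈ Finset.range t, Y j ω) / (t:ℝ) - μ > z t} ≤
        ENNReal.ofReal ((N:ℝ) * (δ / (κ * ((k:ℝ)+1))) ^ (((N:ℝ)+1)/(N:ℝ))) :=
  lil_klucb_dyadic_block_deviation_general P Y hmeas hindep hbdd μ hμ hmean δ hδ l N hN κ hκ f hf z
    hz
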